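/- With s* = ((L−1)/L)·N + 1 for integers L ≥ 1 dividing N, the optimally-stable code rate R_s(N_B, w, s*) is bounded below by (log₂ η)/η where η = [((L−1)N + 2L)/((L−1)N + L)] · [N_B/(N_B + 1)]. -/

import Mathlib

/-!
Since `(L−1)N + L = L·s*` and `(L−1)N + 2L = L·(s*+1)`, the weight equation turns `η` into
`N_B / w`, so the claim is `w·log₂(N_B / w) ≤ log₂ C(N_B, w)`, i.e. `C(N_B, w) ≥ (N_B / w)^w`.
That binomial bound follows by comparing `n^k·k!` with `k^k·n(n−1)⋯(n−k+1)` factor by factor,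
as `n(k−i) ≤ k(n−i)` for `i < k ≤ n`.
-/

open Real Finset

namespace Nat

theorem pow_mul_factorial_le_pow_mul_descFactorial {n k : ℕ} (h : k ≤ n) :
    n ^ k * k ! ≤ k ^ k * n.descFactorial k := by
  rw [← descFactorial_self, descFactorial_eq_prod_range, descFactorial_eq_prod_range,
    ← card_range k, ← prod_const, ← prod_const, card_range, ← prod_mul_distrib,
    ← prod_mul_distrib]
  refine prod_le_prod' fun i hi => ?_
  have hik : i * k ≤ i * n := Nat.mul_le_mul_left i h
  rw [Nat.mul_sub, Nat.mul_sub, Nat.mul_comm n k, Nat.mul_comm n i, Nat.mul_comm k i]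
  omega

theorem pow_le_pow_mul_choose {n k : ℕ} (h : k ≤ n) : n ^ k ≤ k ^ k * n.choose k := by
  have := pow_mul_factorial_le_pow_mul_descFactorial h
  rw [descFactorial_eq_factorial_mul_choose, Nat.mul_left_comm, Nat.mul_comm (k !)] at this
  exact Nat.le_of_mul_le_mul_right this (factorial_pos k)

theorem div_pow_le_choose {n k : ℕ} (h : k ≤ n) : ((n : ℝ) / k) ^ k ≤ n.choose k := by
  rcases k.eq_zero_or_pos with rfl | hk
  · simp
  rw [div_pow, div_le_iff₀ (by positivity), mul_comm]
  exact_mod_cast pow_le_pow_mul_choose h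

theorem mul_logb_div_le_logb_choose {b : ℝ} (hb : 1 < b) {n k : ℕ} (hk : 0 < k) (h : k ≤ n) :
    k * logb b (n / k) ≤ logb b (n.choose k) := by
  have hn : 0 < n := hk.trans_le h
  rw [← logb_pow]
  exact logb_le_logb_of_le hb (by positivity) (div_pow_le_choose h)

theorem logb_div_div_le_logb_choose_div {b : ℝ} (hb : 1 < b) {n k : ℕ} (hk : 0 < k)
    (h : k ≤ n) : logb b (n / k) / (n / k) ≤ logb b (n.choose k) / n := by
  rw [div_div_eq_mul_div, mul_comm]
  gcongr
  exact mul_logb_div_le_logb_choose hb hk h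

end Nat

theorem optimally_stable_eta_eq {N N_B L w sstar : ℕ} (hL : 0 < L)
    (hsstar : L * sstar = (L - 1) * N + L) (hw : (sstar + 1) * w = sstar * (N_B + 1))
    (hwpos : 0 < w) :
    (((L : ℝ) - 1) * N + 2 * L) / (((L : ℝ) - 1) * N + L) * ((N_B : ℝ) / ((N_B : ℝ) + 1)) =
      N_B / w := by
  have hs : sstar ≠ 0 := by
    rintro rfl
    omega
  have hsR : (L : ℝ) * sstar = ((L : ℝ) - 1) * N + L := by
    rw [← Nat.cast_one, ← Nat.cast_sub hL]
    exact_mod_cast congrArg (Nat.cast : ℕ → ℝ) hsstar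
  have hwR : ((sstar : ℝ) + 1) * w = sstar * ((N_B : ℝ) + 1) := by
    exact_mod_cast congrArg (Nat.cast : ℕ → ℝ) hw
  rw [← hsR, show ((L : ℝ) - 1) * N + 2 * L = L * (sstar + 1) by linarith,
    mul_div_mul_left _ _ (by positivity)]
  rw [div_mul_div_comm, div_eq_div_iff (by positivity) (by positivity)]
  linear_combination (N_B : ℝ) * hwR

theorem optimally_stable_rate_lower_bound_general (N N_B L w sstar : ℕ)
    (hL : 0 < L)
    (hsstar : L * sstar = (L - 1) * N + L)
    (hw : (sstar + 1) * w = sstar * (N_B + 1))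
    (hwpos : 0 < w) (hwN : w ≤ N_B) :
    Real.logb 2 ((((L : ℝ) - 1) * N + 2 * L) / (((L : ℝ) - 1) * N + L) *
        ((N_B : ℝ) / ((N_B : ℝ) + 1))) /
      ((((L : ℝ) - 1) * N + 2 * L) / (((L : ℝ) - 1) * N + L) *
        ((N_B : ℝ) / ((N_B : ℝ) + 1))) ≤
      Real.logb 2 (Nat.choose N_B w) / N_B := by
  rw [optimally_stable_eta_eq hL hsstar hw hwpos]
  exact Nat.logb_div_div_le_logb_choose_div one_lt_two hwpos hwN

/-- With `s* = ((L−1)/L)·N + 1` for `L ≥ 1` dividing `N`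
(expressed integrally as `L·s* = (L−1)·N + L`), and the optimally-stable weight
`w = (s*/(s*+1))(N_B+1)` (expressed as `(s*+1)·w = s*·(N_B+1)`), the
optimally-stable code rate `R_s = (1/N_B)·log₂ C(N_B, w)` is bounded below by
`(log₂ η)/η`, where
`η = [((L−1)N + 2L)/((L−1)N + L)]·[N_B/(N_B+1)]`. -/
theorem optimally_stable_rate_lower_bound (N N_B L w sstar : ℕ)
    (hL : 0 < L) (hdvd : L ∣ N) (hN : 0 < N)
    (hsstar : L * sstar = (L - 1) * N + L)
    (hw : (sstar + 1) * w = sstar * (N_B + 1))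
    (hwpos : 0 < w) (hwN : w ≤ N_B) (hNB : 0 < N_B) :
    Real.logb 2 ((((L : ℝ) - 1) * N + 2 * L) / (((L : ℝ) - 1) * N + L) *
        ((N_B : ℝ) / ((N_B : ℝ) + 1))) /
      ((((L : ℝ) - 1) * N + 2 * L) / (((L : ℝ) - 1) * N + L) *
        ((N_B : ℝ) / ((N_B : ℝ) + 1))) ≤
      Real.logb 2 (Nat.choose N_B w) / N_B :=
  optimally_stable_rate_lower_bound_general N N_B L w sstar hL hsstar hw hwpos hwN
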